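/- Let X be a non-empty set, f : X → X a self-map, and x₀ ∈ X a point with f(x₀) ≠ x₀. Suppose there is a natural number N such that the cardinality of f⁻²(x₀) is strictly greater than N³ and the cardinality of f⁻¹(x) is at most N for every x ∈ X with x ≠ x₀. Then f has no iterative root of any order n ≥ 2; that is, for every n ≥ 2 there is no map g : X → X (not assumed continuous or otherwise structured) with gⁿ = f. -/
import Mathlib

open Cardinal

/-- Auxiliary counting lemma: if `S` is covered by a union over `I` of sets of
cardinality at most `b`, and `#I ≤ a`, then `#S ≤ a * b`. -/
lemma aux_card_cover {α : Type*} {I : Set α} {T : α → Set α} {S : Set α}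
    (hS : S ⊆ ⋃ i ∈ I, T i) {a b : Cardinal}
    (hI : Cardinal.mk I ≤ a) (hT : ∀ i ∈ I, Cardinal.mk (T i) ≤ b) :
    Cardinal.mk S ≤ a * b := by
  calc Cardinal.mk S ≤ Cardinal.mk (⋃ i ∈ I, T i) := Cardinal.mk_le_mk_of_subset hS
    _ ≤ Cardinal.mk I * ⨆ i : I, Cardinal.mk (T i) := Cardinal.mk_biUnion_le T I
    _ ≤ a * b := mul_le_mul' hI (ciSup_le' fun i => hT i i.2)

/-- **(C1) of Theorem 2 (the tool).** If `f : X → X` satisfies `f x₀ ≠ x₀`,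
`#f⁻²(x₀) > N³` and `#f⁻¹(x) ≤ N` for all `x ≠ x₀`, then `f` has no iterative
root of any order `n ≥ 2`. -/
theorem no_iterative_root_of_card_bound {X : Type*} [Nonempty X]
    (f : X → X) (x₀ : X) (hx₀ : f x₀ ≠ x₀) (N : ℕ)
    (h2 : (N : Cardinal) ^ 3 < Cardinal.mk ((fun y => f (f y)) ⁻¹' {x₀}))
    (h1 : ∀ x : X, x ≠ x₀ → Cardinal.mk (f ⁻¹' {x}) ≤ (N : Cardinal)) :
    ∀ n : ℕ, 2 ≤ n → ¬ ∃ g : X → X, g^[n] = f := by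
  rintro n hn ⟨g, hg⟩
  obtain ⟨m, rfl⟩ : ∃ m, n = m + 2 := ⟨n - 2, by omega⟩
  set S : Set X := (fun y => f (f y)) ⁻¹' {x₀} with hS_def
  have hfy : ∀ y, f y = g^[m + 2] y := fun y => (congrFun hg y).symm
  have iter : ∀ (a b : ℕ) (x : X), g^[a + b] x = g^[a] (g^[b] x) :=
    fun a b x => Function.iterate_add_apply g a b x
  have hgx₀ : g x₀ ≠ x₀ := by
    intro h
    exact hx₀ (by rw [hfy x₀, Function.iterate_fixed h])
  -- for y ∈ S, the 2n-th iterate of g at y is x₀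
  have hy2 : ∀ y ∈ S, g^[2 * m + 4] y = x₀ := by
    intro y hy
    have : (2 * m + 4 : ℕ) = (m + 2) + (m + 2) := by omega
    rw [this, iter, ← hfy, ← hfy]
    exact hy
  -- Step 1: a set A with #A ≤ N containing g^[2m+3] y for all y ∈ S
  have step1 : ∃ A : Set X, Cardinal.mk A ≤ (N : Cardinal) ∧
      ∀ y ∈ S, g^[2 * m + 3] y ∈ A := by
    by_cases hco : g^[m + 1] x₀ = x₀
    · -- degenerate case: then g^[m] x₀ ≠ x₀, use A = g '' f⁻¹' {g^[m] x₀}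
      have hm : g^[m] x₀ ≠ x₀ := by
        intro h
        apply hgx₀
        have : g^[m + 1] x₀ = g (g^[m] x₀) := Function.iterate_succ_apply' g m x₀
        rw [h] at this
        rw [← this, hco]
      refine ⟨g '' (f ⁻¹' {g^[m] x₀}), ?_, ?_⟩
      · exact Cardinal.mk_image_le.trans (h1 _ hm)
      · intro y hy
        refine ⟨g^[2 * m + 2] y, ?_, ?_⟩
        · simp only [Set.mem_preimage, Set.mem_singleton_iff]
          rw [hfy, ← iter]
          have e : (m + 2) + (2 * m + 2) = m + (2 * m + 4) := by omega
          rw [e, iter, hy2 y hy]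
        · exact (Function.iterate_succ_apply' g (2 * m + 2) y).symm
    · -- main case: A = f⁻¹' {g^[m+1] x₀}
      refine ⟨f ⁻¹' {g^[m + 1] x₀}, h1 _ hco, ?_⟩
      intro y hy
      simp only [Set.mem_preimage, Set.mem_singleton_iff]
      rw [hfy, ← iter]
      have e : (m + 2) + (2 * m + 3) = (m + 1) + (2 * m + 4) := by omega
      rw [e, iter, hy2 y hy]
  obtain ⟨A, hA, hAmem⟩ := step1
  -- g^[2m+3] y ≠ x₀ for y ∈ S
  have hu_ne : ∀ y ∈ S, g^[2 * m + 3] y ≠ x₀ := by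
    intro y hy h
    apply hgx₀
    have : g^[2 * m + 4] y = g (g^[2 * m + 3] y) :=
      Function.iterate_succ_apply' g (2 * m + 3) y
    rw [hy2 y hy, h] at this
    exact this.symm
  set A' : Set X := A \ {x₀} with hA'_def
  have hA' : Cardinal.mk A' ≤ (N : Cardinal) :=
    (Cardinal.mk_le_mk_of_subset (Set.diff_subset)).trans hA
  -- Step 2: V = union of fibers over A'
  set V : Set X := ⋃ u ∈ A', f ⁻¹' {u} with hV_def
  have hVmem : ∀ y ∈ S, g^[m + 1] y ∈ V := by
    intro y hy
    refine Set.mem_biUnion ⟨hAmem y hy, hu_ne y hy⟩ ?_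
    simp only [Set.mem_preimage, Set.mem_singleton_iff]
    rw [hfy, ← iter]
    have e : (m + 2) + (m + 1) = 2 * m + 3 := by omega
    rw [e]
  have hV : Cardinal.mk V ≤ (N : Cardinal) * N := by
    refine aux_card_cover (le_refl V) hA' ?_
    intro u hu
    exact h1 u hu.2
  -- Step 3: cover S by fibers over g '' V
  have hScover : S ⊆ ⋃ v ∈ V, (f ⁻¹' {g v} ∩ S) := by
    intro y hy
    refine Set.mem_biUnion (hVmem y hy) ⟨?_, hy⟩
    simp only [Set.mem_preimage, Set.mem_singleton_iff]
    rw [hfy, ← Function.iterate_succ_apply' g (m + 1) y]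
  have hT : ∀ v : X, Cardinal.mk ((f ⁻¹' {g v} ∩ S : Set X)) ≤ (N : Cardinal) := by
    intro v
    by_cases hv : g v = x₀
    · have : (f ⁻¹' {g v} ∩ S : Set X) = ∅ := by
        ext y
        simp only [Set.mem_inter_iff, Set.mem_preimage, Set.mem_singleton_iff,
          Set.mem_empty_iff_false, iff_false, not_and]
        intro h1y h2y
        apply hx₀
        have : f (f y) = x₀ := h2y
        rw [hv] at h1y
        rw [h1y] at this
        exact this
      rw [this]
      simp
    · exact (Cardinal.mk_le_mk_of_subset Set.inter_subset_left).trans (h1 _ hv)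
  have hfinal : Cardinal.mk S ≤ ((N : Cardinal) * N) * N :=
    aux_card_cover hScover hV (fun v _ => hT v)
  have : ((N : Cardinal) * N) * N = (N : Cardinal) ^ 3 := by ring
  rw [this] at hfinal
  exact absurd h2 (not_lt.2 hfinal)
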